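/- Let Γ and I be infinite sets and let 0 → c₀(Γ) → Z → c₀(I) → 0 be a twisted sum of real Banach spaces. Then Z is isomorphically polyhedral: Z admits an equivalent norm under which, for every finite-dimensional subspace F of Z, the closed unit ball of F is the convex hull of a finite set. -/

import Mathlib

open Filter Topology

noncomputable section

/-- The subspace `c₀(Γ)` of `ℓ∞(Γ)` consisting of the functions `f : Γ → ℝ` such that
for every `ε > 0` the set `{γ | ε ≤ |f γ|}` is finite. -/
def c0Submodule (Γ : Type*) : Submodule ℝ (lp (fun _ : Γ => ℝ) ⊤) where
  carrier := {f | ∀ ε : ℝ, 0 < ε → {γ : Γ | ε ≤ |f γ|}.Finite}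
  zero_mem' := by
    intro ε hε
    convert Set.finite_empty
    ext γ
    simp only [Set.mem_setOf_eq, Set.mem_empty_iff_false, iff_false, not_le]
    rw [lp.coeFn_zero]
    simpa using hε
  add_mem' := by
    intro f g hf hg ε hε
    refine ((hf (ε/2) (by linarith)).union (hg (ε/2) (by linarith))).subset ?_
    intro γ hγ
    simp only [Set.mem_setOf_eq, Set.mem_union] at hγ ⊢
    by_contra hc
    push_neg at hc
    obtain ⟨h1, h2⟩ := hc
    have habs : |(f + g : lp (fun _ : Γ => ℝ) ⊤) γ| ≤ |f γ| + |g γ| := by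
      rw [lp.coeFn_add]
      exact abs_add_le _ _
    linarith
  smul_mem' := by
    intro a f hf ε hε
    have ha : (0:ℝ) < |a| + 1 := by positivity
    refine (hf (ε / (|a| + 1)) (by positivity)).subset ?_
    intro γ hγ
    simp only [Set.mem_setOf_eq] at hγ ⊢
    have h1 : |(a • f : lp (fun _ : Γ => ℝ) ⊤) γ| = |a| * |f γ| := by
      rw [lp.coeFn_smul]
      simp [abs_mul]
    rw [h1] at hγ
    rw [div_le_iff₀ ha]
    have hfγ : (0:ℝ) ≤ |f γ| := abs_nonneg _
    nlinarith

/-- The Banach space `c₀(Γ)`. -/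
abbrev c0 (Γ : Type*) : Type _ := ↥(c0Submodule Γ)

/-- A twisted sum `0 → Y →ʲ Z →^q X → 0`: `j` is an isomorphic embedding (injective with
closed range), `q` is surjective, and `range j = ker q`. -/
def IsTwistedSum {Y Z X : Type*} [NormedAddCommGroup Y] [NormedSpace ℝ Y]
    [NormedAddCommGroup Z] [NormedSpace ℝ Z] [NormedAddCommGroup X] [NormedSpace ℝ X]
    (j : Y →L[ℝ] Z) (q : Z →L[ℝ] X) : Prop :=
  Function.Injective j ∧ IsClosed (Set.range j) ∧ Function.Surjective q ∧
    ∀ z : Z, q z = 0 ↔ z ∈ Set.range j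

/-- `n` is a norm on `Z` equivalent to the given norm. -/
def IsEquivNorm {Z : Type*} [NormedAddCommGroup Z] [NormedSpace ℝ Z] (n : Z → ℝ) : Prop :=
  (∀ z w : Z, n (z + w) ≤ n z + n w) ∧
  (∀ (a : ℝ) (z : Z), n (a • z) = |a| * n z) ∧
  ∃ c C : ℝ, 0 < c ∧ 0 < C ∧ ∀ z : Z, c * ‖z‖ ≤ n z ∧ n z ≤ C * ‖z‖

/-- The dual norm on `Z* = Z →L[ℝ] ℝ` induced by an (equivalent) norm `n` on `Z`:
`‖z*‖' = sup {|z* z| : n z ≤ 1}`. -/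
noncomputable def dualNormOf {Z : Type*} [NormedAddCommGroup Z] [NormedSpace ℝ Z]
    (n : Z → ℝ) (zstar : Z →L[ℝ] ℝ) : ℝ :=
  sSup ((fun z => |zstar z|) '' {z : Z | n z ≤ 1})
/-- `B` is a boundary with property (⋆) for `X`, with respect to a norm function `n` on `X`
and the corresponding dual norm function `nd` on `X* = X →L[ℝ] ℝ`: `B` is a subset of the
dual unit sphere, norming every point of `X`, and every weak*-accumulation point `x*` of `B`
satisfies `x* x < 1` whenever `n x = 1`. -/
def IsBoundaryWithStar {X : Type*} [NormedAddCommGroup X] [NormedSpace ℝ X]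
    (n : X → ℝ) (nd : (X →L[ℝ] ℝ) → ℝ) (B : Set (X →L[ℝ] ℝ)) : Prop :=
  (∀ xstar ∈ B, nd xstar = 1) ∧
  (∀ x : X, ∃ xstar ∈ B, xstar x = n x) ∧
  (∀ xstar : X →L[ℝ] ℝ,
    (∀ U ∈ nhds (StrongDual.toWeakDual xstar),
        ∃ b ∈ B, b ≠ xstar ∧ StrongDual.toWeakDual b ∈ U) →
    ∀ x : X, n x = 1 → xstar x < 1)

/-- The norm function `n` on `Z` is polyhedral: for every finite-dimensional subspace `F`
of `Z`, the closed unit ball of `F` (with respect to `n`) is the convex hull of a finite set. -/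
def IsPolyhedralNorm {Z : Type*} [NormedAddCommGroup Z] [NormedSpace ℝ Z] (n : Z → ℝ) : Prop :=
  ∀ F : Submodule ℝ Z, FiniteDimensional ℝ F →
    ∃ s : Finset Z, {z : Z | z ∈ F ∧ n z ≤ 1} = convexHull ℝ (s : Set Z)

/-!
Lift the coordinate functionals of `c₀(Γ)` through `j` to uniformly bounded functionals `f γ`
on `Z` (Hahn–Banach; `j` is an isomorphic embedding), and compose the coordinate functionals of
`c₀(I)` with `q`, scaled by a constant `c`. The supremum `n` of the moduli of all these
functionals is an equivalent norm. By the open mapping theorem each `z` is `n z / 2`-close to some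
`j y`, and the numbers `f γ z` are `n z / 2`-close to the coordinates of `y ∈ c₀(Γ)`; hence at a
point of the `n`-unit sphere only finitely many functionals of the family exceed `3/4` in modulus.
This persists on a neighbourhood, so a compact piece of the sphere lies on only finitely many
faces `|φ| = 1`, and the unit ball of a finite-dimensional subspace is cut out by finitely many
half-spaces. Such a compact polyhedron has finitely many extreme points and, by Krein–Milman, is
their convex hull.
-/

open Set

namespace c0

variable {α : Type*}

theorem isClosed_c0Submodule (α : Type*) :
    IsClosed (c0Submodule α : Set (lp (fun _ : α => ℝ) ⊤)) := by
  refine isClosed_of_closure_subset fun f hf ε hε => ?_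
  obtain ⟨g, hg, hfg⟩ := Metric.mem_closure_iff.1 hf (ε / 2) (half_pos hε)
  refine (hg (ε / 2) (half_pos hε)).subset fun γ (hγ : ε ≤ |f γ|) => ?_
  have hfgγ : |f γ - g γ| ≤ ‖f - g‖ := lp.norm_apply_le_norm ENNReal.top_ne_zero (f - g) γ
  rw [← dist_eq_norm] at hfgγ
  show ε / 2 ≤ |g γ|
  linarith [abs_sub_abs_le_abs_sub (f γ) (g γ)]

instance : CompleteSpace (c0 α) := (isClosed_c0Submodule α).completeSpace_coe

def coord (i : α) : c0 α →L[ℝ] ℝ :=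
  (lp.evalCLM ℝ (fun _ : α => ℝ) ⊤ i).comp (c0Submodule α).subtypeL

theorem coord_apply (i : α) (y : c0 α) : coord i y = (y : lp (fun _ : α => ℝ) ⊤) i := rfl

theorem norm_coord_le (i : α) : ‖coord (α := α) i‖ ≤ 1 :=
  ContinuousLinearMap.opNorm_le_bound _ zero_le_one fun y => by
    simpa [coord_apply] using
      lp.norm_apply_le_norm ENNReal.top_ne_zero (y : lp (fun _ : α => ℝ) ⊤) i

theorem norm_le_of_forall_abs_coord_le {y : c0 α} {R : ℝ} (hR : 0 ≤ R)
    (h : ∀ i, |coord i y| ≤ R) : ‖y‖ ≤ R :=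
  lp.norm_le_of_forall_le (f := (y : lp (fun _ : α => ℝ) ⊤)) hR h

theorem finite_setOf_lt_abs_coord (y : c0 α) {r : ℝ} (hr : 0 < r) :
    {i | r < |coord i y|}.Finite :=
  (y.2 r hr).subset fun _ (hi : r < _) => hi.le

end c0

theorem ContinuousLinearMap.exists_extension_of_injective_of_isClosed_range
    {E F : Type*} [NormedAddCommGroup E] [NormedSpace ℝ E] [CompleteSpace E]
    [NormedAddCommGroup F] [NormedSpace ℝ F] [CompleteSpace F] (j : E →L[ℝ] F)
    (hinj : Function.Injective j) (hclosed : IsClosed (range j)) :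
    ∃ M, 0 ≤ M ∧ ∀ ℓ : StrongDual ℝ E, ∃ f : StrongDual ℝ F, f.comp j = ℓ ∧ ‖f‖ ≤ M * ‖ℓ‖ := by
  set e := j.equivRange hinj hclosed
  refine ⟨‖e.symm.toContinuousLinearMap‖, ContinuousLinearMap.opNorm_nonneg _, fun ℓ => ?_⟩
  obtain ⟨f, hf, hfnorm⟩ := exists_extension_norm_eq _ (ℓ.comp e.symm.toContinuousLinearMap)
  refine ⟨f, ContinuousLinearMap.ext fun y => ?_, ?_⟩
  · simpa [e] using hf ⟨j y, LinearMap.mem_range_self _ y⟩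
  · rw [hfnorm, mul_comm]
    exact ℓ.opNorm_comp_le _

theorem ContinuousLinearMap.exists_norm_sub_le_of_ker_le_range
    {E Z X : Type*} [NormedAddCommGroup E] [NormedSpace ℝ E]
    [NormedAddCommGroup Z] [NormedSpace ℝ Z] [CompleteSpace Z]
    [NormedAddCommGroup X] [NormedSpace ℝ X] [CompleteSpace X]
    (j : E →L[ℝ] Z) (q : Z →L[ℝ] X) (hsurj : Function.Surjective q)
    (hexact : ∀ z, q z = 0 → z ∈ range j) :
    ∃ C > 0, ∀ z, ∃ y, ‖z - j y‖ ≤ C * ‖q z‖ := by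
  obtain ⟨C, hC, hpre⟩ := q.exists_preimage_norm_le hsurj
  refine ⟨C, hC, fun z => ?_⟩
  obtain ⟨z₀, hz₀, hz₀norm⟩ := hpre (q z)
  obtain ⟨y, hy⟩ := hexact (z - z₀) (by rw [map_sub, hz₀, sub_self])
  exact ⟨y, by rwa [hy, sub_sub_cancel]⟩

namespace IsEquivNorm

variable {Z : Type*} [NormedAddCommGroup Z] [NormedSpace ℝ Z] {n : Z → ℝ}

theorem continuous (hn : IsEquivNorm n) : Continuous n := by
  obtain ⟨hadd, -, _, C, -, -, hbound⟩ := hn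
  refine (LipschitzWith.of_le_add_mul' C fun x y => ?_).continuous
  calc n x = n ((x - y) + y) := by rw [sub_add_cancel]
    _ ≤ n (x - y) + n y := hadd _ _
    _ ≤ n y + C * dist x y := by rw [dist_eq_norm]; linarith [(hbound (x - y)).2]

theorem isCompact_setOf_mem_and_le_one (hn : IsEquivNorm n) (F : Submodule ℝ Z)
    [FiniteDimensional ℝ F] : IsCompact {z | z ∈ F ∧ n z ≤ 1} := by
  have hclosed : IsClosed {z | z ∈ F ∧ n z ≤ 1} :=
    F.closed_of_finiteDimensional.inter (isClosed_le hn.continuous continuous_const)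
  obtain ⟨-, -, c, _, hc, -, hbound⟩ := hn
  refine ((isCompact_closedBall (0 : F) c⁻¹).image continuous_subtype_val).of_isClosed_subset
    hclosed fun z ⟨hzF, hz⟩ => ⟨⟨z, hzF⟩, ?_, rfl⟩
  simpa using (le_inv_mul_iff₀ hc).2 ((hbound z).1.trans hz)

end IsEquivNorm

section Polyhedron

variable {E 𝓕 : Type*} [AddCommGroup E] [Module ℝ E] [FunLike 𝓕 E ℝ] [LinearMapClass 𝓕 ℝ E ℝ]

def polyhedron (F : Submodule ℝ E) (Ψ : Finset 𝓕) : Set E := {z | z ∈ F ∧ ∀ ψ ∈ Ψ, ψ z ≤ 1}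

variable {F : Submodule ℝ E} {Ψ : Finset 𝓕}

theorem convex_polyhedron : Convex ℝ (polyhedron F Ψ) := by
  rintro x ⟨hxF, hx⟩ y ⟨hyF, hy⟩ a b ha hb hab
  refine ⟨F.add_mem (F.smul_mem a hxF) (F.smul_mem b hyF), fun ψ hψ => ?_⟩
  rw [map_add, map_smul, map_smul, smul_eq_mul, smul_eq_mul]
  nlinarith [hx ψ hψ, hy ψ hψ]

/- Moving from `e` towards `e'` along `d = e' - e` keeps the facets of `e` tight and the other
constraints slack for a short while in both directions. -/
theorem eq_of_mem_extremePoints_polyhedron {e e' : E}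
    (he : e ∈ (polyhedron F Ψ).extremePoints ℝ) (he' : e' ∈ polyhedron F Ψ)
    (hfacet : ∀ ψ ∈ Ψ, ψ e = 1 → ψ e' = 1) : e = e' := by
  obtain ⟨⟨heF, heΨ⟩, hext⟩ := mem_extremePoints.1 he
  set d := e' - e
  have hslack : ∀ᶠ t in 𝓝 (0 : ℝ), ∀ ψ ∈ Ψ, ψ e + |t| * |ψ d| ≤ 1 := by
    refine (Finset.eventually_all Ψ).2 fun ψ hψ => ?_
    rcases (heΨ ψ hψ).eq_or_lt with hψe | hψe
    · have hψd : ψ d = 0 := by rw [map_sub, hfacet ψ hψ hψe, hψe, sub_self]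
      exact Eventually.of_forall fun t => by rw [hψd, hψe]; simp
    · have hcont : Continuous fun t : ℝ => ψ e + |t| * |ψ d| := by fun_prop
      exact (hcont.tendsto 0).eventually_le_const (by simpa using hψe)
  obtain ⟨t, ht, ht0⟩ := ((hslack.filter_mono nhdsWithin_le_nhds).and
    (self_mem_nhdsWithin : ∀ᶠ t in 𝓝[≠] (0 : ℝ), t ≠ 0)).exists
  have hmem : ∀ s : ℝ, |s| = |t| → e + s • d ∈ polyhedron F Ψ := fun s hs =>
    ⟨F.add_mem heF (F.smul_mem s (F.sub_mem he'.1 heF)), fun ψ hψ => by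
      have hstep : s * ψ d ≤ |t| * |ψ d| := by rw [← hs, ← abs_mul]; exact le_abs_self _
      rw [map_add, map_smul, smul_eq_mul]
      linarith [ht ψ hψ]⟩
  have hseg : e ∈ openSegment ℝ (e + t • d) (e + (-t) • d) :=
    ⟨1 / 2, 1 / 2, by norm_num, by norm_num, by norm_num, by module⟩
  have htd : t • d = 0 := by
    simpa using (hext _ (hmem t rfl) _ (hmem (-t) (abs_neg t)) hseg).1
  exact (sub_eq_zero.1 ((smul_eq_zero.1 htd).resolve_left ht0)).symm

theorem finite_extremePoints_polyhedron : ((polyhedron F Ψ).extremePoints ℝ).Finite := by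
  classical
  refine Finite.of_injOn (f := fun e => Ψ.filter (fun ψ => ψ e = 1)) (t := Ψ.powerset)
    (fun e _ => Finset.mem_powerset.2 (Finset.filter_subset _ _)) ?_ (Ψ.powerset.finite_toSet)
  intro e he e' he' hfacets
  refine eq_of_mem_extremePoints_polyhedron he (extremePoints_subset he') fun ψ hψ hψe => ?_
  have hfacets' : Ψ.filter (fun ψ => ψ e = 1) = Ψ.filter (fun ψ => ψ e' = 1) := hfacets
  have hψe' : ψ ∈ Ψ.filter (fun ψ => ψ e' = 1) := hfacets' ▸ Finset.mem_filter.2 ⟨hψ, hψe⟩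
  exact (Finset.mem_filter.1 hψe').2

end Polyhedron

theorem convexHull_extremePoints_eq_of_finite {E : Type*} [AddCommGroup E] [Module ℝ E]
    [TopologicalSpace E] [T2Space E] [IsTopologicalAddGroup E] [ContinuousSMul ℝ E]
    [LocallyConvexSpace ℝ E] {s : Set E} (hs : IsCompact s) (hconv : Convex ℝ s)
    (hfin : (s.extremePoints ℝ).Finite) : convexHull ℝ (s.extremePoints ℝ) = s :=
  (hfin.isCompact_convexHull ℝ).isClosed.closure_eq.symm.trans
    (closure_convexHull_extremePoints hs hconv)

section SupNorm

variable {Z K : Type*} [NormedAddCommGroup Z] [NormedSpace ℝ Z]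

def supNorm (φ : K → StrongDual ℝ Z) (z : Z) : ℝ := ⨆ k, |φ k z|

variable {φ : K → StrongDual ℝ Z} {L : ℝ}

theorem supNorm_nonneg (z : Z) : 0 ≤ supNorm φ z := Real.iSup_nonneg fun _ => abs_nonneg _

theorem supNorm_smul (a : ℝ) (z : Z) : supNorm φ (a • z) = |a| * supNorm φ z := by
  simp only [supNorm, map_smul, smul_eq_mul, abs_mul, Real.mul_iSup_of_nonneg (abs_nonneg a)]

theorem abs_apply_le_supNorm (hφ : ∀ k, ‖φ k‖ ≤ L) (k : K) (z : Z) : |φ k z| ≤ supNorm φ z :=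
  le_ciSup ⟨L * ‖z‖, forall_mem_range.2 fun k => (φ k).le_of_opNorm_le (hφ k) z⟩ k

theorem isEquivNorm_supNorm (hφ : ∀ k, ‖φ k‖ ≤ L) (hL : 0 ≤ L) {R : ℝ} (hR : 0 < R)
    (hlower : ∀ z, ‖z‖ ≤ R * supNorm φ z) : IsEquivNorm (supNorm φ) := by
  refine ⟨fun z w => ?_, supNorm_smul, R⁻¹, L + 1, inv_pos.2 hR, by linarith, fun z => ⟨?_, ?_⟩⟩
  · refine Real.iSup_le (fun k => ?_) (add_nonneg (supNorm_nonneg z) (supNorm_nonneg w))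
    rw [map_add]
    exact (abs_add_le _ _).trans
      (add_le_add (abs_apply_le_supNorm hφ k z) (abs_apply_le_supNorm hφ k w))
  · rw [inv_mul_le_iff₀ hR]
    exact hlower z
  · refine Real.iSup_le (fun k => ?_) (by positivity)
    have := (φ k).le_of_opNorm_le (hφ k) z
    rw [Real.norm_eq_abs] at this
    nlinarith [norm_nonneg z]

theorem exists_abs_apply_eq_supNorm (hφ : ∀ k, ‖φ k‖ ≤ L) {z : Z} (hz : supNorm φ z = 1)
    {θ : ℝ} (hθ : θ < 1) (hfin : {k | θ < |φ k z|}.Finite) : ∃ k, |φ k z| = 1 := by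
  have : Nonempty K := by
    by_contra! hK
    simp [supNorm] at hz
  obtain ⟨k₁, hk₁⟩ := exists_lt_of_lt_ciSup (hz ▸ hθ : θ < supNorm φ z)
  obtain ⟨k₀, hk₀, hmax⟩ := exists_max_image _ (fun k => |φ k z|) hfin ⟨k₁, hk₁⟩
  refine ⟨k₀, hz ▸ (abs_apply_le_supNorm hφ k₀ z).antisymm (ciSup_le fun k => ?_)⟩
  by_cases hk : θ < |φ k z|
  · exact hmax k hk
  · exact (not_lt.1 hk).trans hk₀.le

/- If `supNorm φ (w - z) < 1 - θ`, every face `|φ k| = 1` through `w` has `θ < |φ k z|`, so the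
finiteness at `z` covers a neighbourhood of `z`; conclude by compactness. -/
theorem finite_setOf_exists_abs_apply_eq_one (hφ : ∀ k, ‖φ k‖ ≤ L)
    (hcont : Continuous (supNorm φ)) {θ : ℝ} (hθ : θ < 1)
    (hfin : ∀ z, supNorm φ z = 1 → {k | θ < |φ k z|}.Finite) {S : Set Z} (hS : IsCompact S)
    (hS1 : ∀ z ∈ S, supNorm φ z = 1) : {k | ∃ z ∈ S, |φ k z| = 1}.Finite := by
  have hnhds : ∀ z ∈ S, {w | supNorm φ (w - z) < 1 - θ} ∈ 𝓝 z := fun z _ =>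
    (isOpen_lt (hcont.comp (continuous_sub_right z)) continuous_const).mem_nhds
      (by simpa [supNorm] using hθ)
  obtain ⟨t, htS, hcover⟩ := hS.elim_nhds_subcover _ hnhds
  refine (t.finite_toSet.biUnion fun z hz => hfin z (hS1 z (htS z hz))).subset ?_
  rintro k ⟨w, hwS, hw⟩
  obtain ⟨z, hzt, hwz⟩ := mem_iUnion₂.1 (hcover hwS)
  refine mem_iUnion₂.2 ⟨z, hzt, ?_⟩
  have hdiff := abs_apply_le_supNorm hφ k (w - z)
  rw [map_sub] at hdiff
  have := abs_sub_abs_le_abs_sub (φ k w) (φ k z)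
  simp only [mem_ofPred_eq] at hwz ⊢
  linarith

theorem supNorm_le_one_of_forall_abs_apply_le_one {F : Submodule ℝ Z} {A : Set K}
    (hA : ∀ z ∈ F, supNorm φ z = 1 → ∃ k ∈ A, |φ k z| = 1) {z : Z} (hz : z ∈ F)
    (h : ∀ k ∈ A, |φ k z| ≤ 1) : supNorm φ z ≤ 1 := by
  by_contra! hlt
  have hpos : 0 < supNorm φ z := one_pos.trans hlt
  have hunit : supNorm φ ((supNorm φ z)⁻¹ • z) = 1 := by
    rw [supNorm_smul, abs_of_pos (inv_pos.2 hpos), inv_mul_cancel₀ hpos.ne']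
  obtain ⟨k, hkA, hk⟩ := hA _ (F.smul_mem _ hz) hunit
  rw [map_smul, smul_eq_mul, abs_mul, abs_of_pos (inv_pos.2 hpos), inv_mul_eq_one₀ hpos.ne'] at hk
  linarith [h k hkA]

theorem isPolyhedralNorm_supNorm (hφ : ∀ k, ‖φ k‖ ≤ L) (hn : IsEquivNorm (supNorm φ)) {θ : ℝ}
    (hθ : θ < 1) (hfin : ∀ z, supNorm φ z = 1 → {k | θ < |φ k z|}.Finite) :
    IsPolyhedralNorm (supNorm φ) := by
  classical
  intro F hF
  have hball := hn.isCompact_setOf_mem_and_le_one F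
  set S := {z | z ∈ F ∧ supNorm φ z = 1}
  have hS : IsCompact S := hball.of_isClosed_subset
    (F.closed_of_finiteDimensional.inter (isClosed_eq hn.continuous continuous_const))
    fun z hz => ⟨hz.1, hz.2.le⟩
  have hA := finite_setOf_exists_abs_apply_eq_one hφ hn.continuous hθ hfin hS fun z hz => hz.2
  set Ψ := hA.toFinset.image φ ∪ hA.toFinset.image fun k => -φ k
  have hattain : ∀ z ∈ F, supNorm φ z = 1 → ∃ k ∈ {k | ∃ z ∈ S, |φ k z| = 1}, |φ k z| = 1 :=
    fun z hzF hz => have ⟨k, hk⟩ := exists_abs_apply_eq_supNorm hφ hz hθ (hfin z hz)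
      ⟨k, ⟨z, ⟨hzF, hz⟩, hk⟩, hk⟩
  have hpoly : {z | z ∈ F ∧ supNorm φ z ≤ 1} = polyhedron F Ψ := by
    ext z
    have hΨ : (∀ ψ ∈ Ψ, ψ z ≤ 1) ↔ ∀ k ∈ {k | ∃ z ∈ S, |φ k z| = 1}, |φ k z| ≤ 1 := by
      simp only [Ψ, Finset.forall_mem_union, Finset.forall_mem_image, Finite.mem_toFinset,
        neg_apply, abs_le', forall_and]
    exact ⟨fun ⟨hzF, hz⟩ => ⟨hzF, hΨ.2 fun k _ => (abs_apply_le_supNorm hφ k z).trans hz⟩,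
      fun ⟨hzF, hz⟩ => ⟨hzF, supNorm_le_one_of_forall_abs_apply_le_one hattain hzF (hΨ.1 hz)⟩⟩
  rw [hpoly] at hball ⊢
  refine ⟨(finite_extremePoints_polyhedron (F := F) (Ψ := Ψ)).toFinset, ?_⟩
  rw [Finite.coe_toFinset, convexHull_extremePoints_eq_of_finite hball convex_polyhedron
    finite_extremePoints_polyhedron]

end SupNorm

section TwistedSum

variable {Γ I Z : Type*} [NormedAddCommGroup Z] [NormedSpace ℝ Z]

def twistedSumFamily (f : Γ → StrongDual ℝ Z) (q : Z →L[ℝ] c0 I) (c : ℝ) :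
    Γ ⊕ I → StrongDual ℝ Z :=
  Sum.elim f fun i => c • (c0.coord i).comp q

variable {j : c0 Γ →L[ℝ] Z} {q : Z →L[ℝ] c0 I} {f : Γ → StrongDual ℝ Z} {M c : ℝ}

theorem norm_twistedSumFamily_le (hfM : ∀ γ, ‖f γ‖ ≤ M) (hc : 0 ≤ c) (k : Γ ⊕ I) :
    ‖twistedSumFamily f q c k‖ ≤ max M (c * ‖q‖) := by
  rcases k with γ | i
  · exact (hfM γ).trans (le_max_left _ _)
  · refine le_trans ?_ (le_max_right _ _)
    calc ‖c • (c0.coord i).comp q‖ ≤ c * (‖c0.coord i‖ * ‖q‖) := by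
          rw [norm_smul, Real.norm_of_nonneg hc]
          exact mul_le_mul_of_nonneg_left (ContinuousLinearMap.opNorm_comp_le _ _) hc
      _ ≤ c * ‖q‖ := by
          gcongr
          exact mul_le_of_le_one_left (norm_nonneg q) (c0.norm_coord_le i)

theorem abs_apply_le_supNorm_twistedSumFamily (hfM : ∀ γ, ‖f γ‖ ≤ M) (hc : 0 ≤ c) (γ : Γ)
    (z : Z) : |f γ z| ≤ supNorm (twistedSumFamily f q c) z :=
  abs_apply_le_supNorm (norm_twistedSumFamily_le hfM hc) (Sum.inl γ) z

theorem mul_norm_le_supNorm_twistedSumFamily (hfM : ∀ γ, ‖f γ‖ ≤ M) (hc : 0 < c) (z : Z) :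
    c * ‖q z‖ ≤ supNorm (twistedSumFamily f q c) z := by
  rw [← le_div_iff₀' hc]
  refine c0.norm_le_of_forall_abs_coord_le (div_nonneg (supNorm_nonneg z) hc.le) fun i => ?_
  rw [le_div_iff₀' hc]
  simpa [twistedSumFamily, abs_mul, abs_of_pos hc] using
    abs_apply_le_supNorm (norm_twistedSumFamily_le hfM hc.le) (Sum.inr i) z

/- The factor `2 (M + 1)` in the scaling constant is what turns the open mapping estimate
`‖z - j y‖ ≤ C ‖q z‖` into bounds by half the new norm. -/
theorem exists_approx_twistedSumFamily (hf : ∀ γ, (f γ).comp j = c0.coord γ)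
    (hfM : ∀ γ, ‖f γ‖ ≤ M) (hM : 0 ≤ M) {C : ℝ} (hC : 0 < C)
    (hlift : ∀ z, ∃ y, ‖z - j y‖ ≤ C * ‖q z‖) (z : Z) :
    ∃ y : c0 Γ, ‖z - j y‖ ≤ supNorm (twistedSumFamily f q (2 * (M + 1) * C)) z / 2 ∧
      ∀ γ, |f γ z - c0.coord γ y| ≤ supNorm (twistedSumFamily f q (2 * (M + 1) * C)) z / 2 := by
  obtain ⟨y, hy⟩ := hlift z
  have hq := mul_norm_le_supNorm_twistedSumFamily (q := q) (c := 2 * (M + 1) * C) hfM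
    (by positivity) z
  have hCq : 0 ≤ C * ‖q z‖ := by positivity
  refine ⟨y, by nlinarith [mul_nonneg hM hCq], fun γ => ?_⟩
  have hfγ : |f γ z - c0.coord γ y| ≤ M * ‖z - j y‖ := by
    rw [← hf γ, ContinuousLinearMap.comp_apply, ← map_sub]
    exact (f γ).le_of_opNorm_le (hfM γ) _
  nlinarith [mul_le_mul_of_nonneg_left hy hM]

theorem norm_le_of_approx_twistedSumFamily (hfM : ∀ γ, ‖f γ‖ ≤ M) (hc : 0 ≤ c) {z : Z}
    {y : c0 Γ} (hy : ‖z - j y‖ ≤ supNorm (twistedSumFamily f q c) z / 2)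
    (hyγ : ∀ γ, |f γ z - c0.coord γ y| ≤ supNorm (twistedSumFamily f q c) z / 2) :
    ‖z‖ ≤ (3 * ‖j‖ + 1) / 2 * supNorm (twistedSumFamily f q c) z := by
  set n := supNorm (twistedSumFamily f q c)
  have hyn : ‖y‖ ≤ 3 / 2 * n z := by
    have hn : 0 ≤ n z := supNorm_nonneg z
    refine c0.norm_le_of_forall_abs_coord_le (by positivity) fun γ => ?_
    have hfz := abs_apply_le_supNorm_twistedSumFamily (q := q) hfM hc γ z
    have := abs_sub_abs_le_abs_sub (c0.coord γ y) (f γ z)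
    rw [abs_sub_comm] at this
    linarith [hyγ γ]
  calc ‖z‖ = ‖j y + (z - j y)‖ := by rw [add_sub_cancel]
    _ ≤ ‖j y‖ + ‖z - j y‖ := norm_add_le _ _
    _ ≤ ‖j‖ * (3 / 2 * n z) + n z / 2 :=
        add_le_add ((j.le_opNorm y).trans (mul_le_mul_of_nonneg_left hyn (norm_nonneg j))) hy
    _ = (3 * ‖j‖ + 1) / 2 * n z := by ring

theorem finite_setOf_lt_abs_twistedSumFamily (hc : 0 < c) {z : Z}
    (hz : supNorm (twistedSumFamily f q c) z = 1) {y : c0 Γ}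
    (hyγ : ∀ γ, |f γ z - c0.coord γ y| ≤ supNorm (twistedSumFamily f q c) z / 2) :
    {k | 3 / 4 < |twistedSumFamily f q c k z|}.Finite := by
  rw [← finite_preimage_inl_and_inr]
  constructor
  · refine (c0.finite_setOf_lt_abs_coord y (by norm_num : (0 : ℝ) < 1 / 4)).subset fun γ hγ => ?_
    simp only [mem_preimage, mem_ofPred_eq, twistedSumFamily, Sum.elim_inl] at hγ ⊢
    have := abs_sub_abs_le_abs_sub (f γ z) (c0.coord γ y)
    linarith [hyγ γ]
  · refine (c0.finite_setOf_lt_abs_coord (q z) (div_pos (by norm_num : (0 : ℝ) < 3 / 4) hc)).subset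
      fun i hi => ?_
    simp only [mem_preimage, mem_ofPred_eq, twistedSumFamily, Sum.elim_inr] at hi ⊢
    rw [div_lt_iff₀' hc]
    simpa [abs_mul, abs_of_pos hc] using hi

end TwistedSum

theorem twistedSum_c0_c0_isomorphically_polyhedral_general {Γ I : Type u}
    {Z : Type u} [NormedAddCommGroup Z] [NormedSpace ℝ Z] [CompleteSpace Z]
    (j : c0 Γ →L[ℝ] Z) (q : Z →L[ℝ] c0 I) (h : IsTwistedSum j q) :
    ∃ n : Z → ℝ, IsEquivNorm n ∧ IsPolyhedralNorm n := by
  obtain ⟨hinj, hclosed, hsurj, hexact⟩ := h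
  obtain ⟨M, hM, hextend⟩ := j.exists_extension_of_injective_of_isClosed_range hinj hclosed
  choose f hfj hfM using fun γ => hextend (c0.coord γ)
  replace hfM : ∀ γ, ‖f γ‖ ≤ M := fun γ =>
    (hfM γ).trans (mul_le_of_le_one_right hM (c0.norm_coord_le γ))
  obtain ⟨C, hC, hlift⟩ :=
    j.exists_norm_sub_le_of_ker_le_range q hsurj fun z hz => (hexact z).1 hz
  set c := 2 * (M + 1) * C
  have hc : 0 < c := by positivity
  have happrox := exists_approx_twistedSumFamily hfj hfM hM hC hlift
  have hφ := norm_twistedSumFamily_le (q := q) hfM hc.le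
  have hn : IsEquivNorm (supNorm (twistedSumFamily f q c)) :=
    isEquivNorm_supNorm hφ (hM.trans (le_max_left _ _)) (by positivity) fun z =>
      have ⟨_, hy, hyγ⟩ := happrox z
      norm_le_of_approx_twistedSumFamily hfM hc.le hy hyγ
  refine ⟨_, hn, isPolyhedralNorm_supNorm hφ hn (by norm_num : (3 / 4 : ℝ) < 1) fun z hz => ?_⟩
  obtain ⟨_, -, hyγ⟩ := happrox z
  exact finite_setOf_lt_abs_twistedSumFamily hc hz hyγ

/-- Every twisted sum of `c₀(Γ)` and `c₀(I)` is isomorphically polyhedral: it admits an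
equivalent norm under which the closed unit ball of every finite-dimensional subspace is
the convex hull of a finite set. -/
theorem twistedSum_c0_c0_isomorphically_polyhedral {Γ I : Type u} [Infinite Γ] [Infinite I]
    {Z : Type u} [NormedAddCommGroup Z] [NormedSpace ℝ Z] [CompleteSpace Z]
    (j : c0 Γ →L[ℝ] Z) (q : Z →L[ℝ] c0 I) (h : IsTwistedSum j q) :
    ∃ n : Z → ℝ, IsEquivNorm n ∧ IsPolyhedralNorm n :=
  twistedSum_c0_c0_isomorphically_polyhedral_general j q h
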